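/- arXiv:2208.11755 — 8 statements merged into one kernel-verified Lean document; each statement's English description precedes it below -/
import Mathlib

section
/- Let S be a finitely generated cancellative commutative monoid and B a finitely generated S-graded commutative k-algebra. Then every k-derivation ∂ : B → B decomposes as a finite sum ∂ = Σ ∂_α of M_S-homogeneous derivations ∂_α of degree α ∈ M_S. -/
/-!
A derivation `D` of a graded algebra `B = ⨁ 𝒜 m` has, for every degree `α`, a homogeneous
component `D_α`, sending `f ∈ 𝒜 m` to the degree-`(m + α)` part of `D f`; the Leibniz rule for
`D_α` follows from that of `D` because multiplication by a homogeneous element shifts degrees.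
For a fixed `f`, only finitely many `D_α f` are nonzero and they sum to `D f`. Since `B` is
generated by finitely many elements, a single finite set of degrees `A` serves all generators,
and the derivations `D` and `∑ α ∈ A, D_α`, agreeing on generators, are equal.
-/

open DirectSum

namespace Derivation

section Component

variable {k B M : Type*} [CommSemiring k] [CommRing B] [Algebra k B]
  [AddCancelCommMonoid M] [DecidableEq M] (𝒜 : M → Submodule k B) [GradedAlgebra 𝒜]
  (D : Derivation k B B) (α : M)

noncomputable def homogeneousComponentₗ : B →ₗ[k] B :=
  toModule k M B (fun m => GradedAlgebra.proj 𝒜 (m + α) ∘ₗ D.toLinearMap ∘ₗ (𝒜 m).subtype)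
    ∘ₗ (decomposeLinearEquiv 𝒜).toLinearMap

variable {𝒜} in
theorem homogeneousComponentₗ_apply_of_mem {m : M} {f : B} (hf : f ∈ 𝒜 m) :
    homogeneousComponentₗ 𝒜 D α f = decompose 𝒜 (D f) (m + α) := by
  have hdecomp : decomposeLinearEquiv 𝒜 f = lof k M (fun i => 𝒜 i) m ⟨f, hf⟩ := by
    rw [decomposeLinearEquiv_apply, decompose_of_mem 𝒜 hf, lof_eq_of]
  simp only [homogeneousComponentₗ, LinearMap.comp_apply, LinearEquiv.coe_coe, hdecomp,
    toModule_lof, Submodule.subtype_apply, GradedAlgebra.proj_apply]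
  rfl

theorem homogeneousComponentₗ_mul (a b : B) :
    homogeneousComponentₗ 𝒜 D α (a * b)
      = a • homogeneousComponentₗ 𝒜 D α b + b • homogeneousComponentₗ 𝒜 D α a := by
  simp only [smul_eq_mul]
  induction a using Decomposition.inductionOn 𝒜 generalizing b with
  | zero => simp
  | add a₁ a₂ h₁ h₂ => simp only [add_mul, map_add, h₁, h₂]; ring
  | @homogeneous i a =>
    induction b using Decomposition.inductionOn 𝒜 with
    | zero => simp
    | add b₁ b₂ h₁ h₂ => simp only [mul_add, map_add, h₁, h₂]; ring
    | @homogeneous j b =>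
      simp only [homogeneousComponentₗ_apply_of_mem D α (SetLike.mul_mem_graded a.2 b.2),
        homogeneousComponentₗ_apply_of_mem D α a.2, homogeneousComponentₗ_apply_of_mem D α b.2,
        D.leibniz, smul_eq_mul, decompose_add, DirectSum.add_apply, Submodule.coe_add]
      rw [show i + j + α = i + (j + α) by abel, coe_decompose_mul_add_of_left_mem 𝒜 a.2,
        show i + (j + α) = j + (i + α) by abel, coe_decompose_mul_add_of_left_mem 𝒜 b.2]

noncomputable def homogeneousComponent : Derivation k B B :=
  mk' (homogeneousComponentₗ 𝒜 D α) (homogeneousComponentₗ_mul 𝒜 D α)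

variable {𝒜} in
theorem homogeneousComponent_apply_of_mem {m : M} {f : B} (hf : f ∈ 𝒜 m) :
    homogeneousComponent 𝒜 D α f = decompose 𝒜 (D f) (m + α) :=
  homogeneousComponentₗ_apply_of_mem D α hf

variable {𝒜} in
theorem homogeneousComponent_mem {m : M} {f : B} (hf : f ∈ 𝒜 m) :
    homogeneousComponent 𝒜 D α f ∈ 𝒜 (m + α) := by
  rw [homogeneousComponent_apply_of_mem D α hf]
  exact SetLike.coe_mem _

end Component

section Support

variable {k B M : Type*} [CommSemiring k] [CommRing B] [Algebra k B]
  [AddCommGroup M] [DecidableEq M] (𝒜 : M → Submodule k B) [GradedAlgebra 𝒜]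
  (D : Derivation k B B)

open scoped Classical in
/-- The degrees `α` for which `homogeneousComponent 𝒜 D α f` may be nonzero. -/
noncomputable def degreeSupport (f : B) : Finset M :=
  (decompose 𝒜 f).support.biUnion fun m =>
    (decompose 𝒜 (D (decompose 𝒜 f m))).support.image (· - m)

variable {𝒜} in
theorem sum_homogeneousComponent_apply_of_mem {A : Finset M} {m : M} {f : B} (hf : f ∈ 𝒜 m)
    (hA : ∀ β, decompose 𝒜 (D f) β ≠ 0 → β - m ∈ A) :
    ∑ α ∈ A, homogeneousComponent 𝒜 D α f = D f := by
  classical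
  have hsupport : (decompose 𝒜 (D f)).support ⊆ A.image (m + ·) := fun β hβ =>
    Finset.mem_image.2 ⟨β - m, hA β (DFinsupp.mem_support_iff.1 hβ), add_sub_cancel m β⟩
  calc ∑ α ∈ A, homogeneousComponent 𝒜 D α f
      = ∑ β ∈ A.image (m + ·), (decompose 𝒜 (D f) β : B) := by
        rw [Finset.sum_image fun _ _ _ _ => add_left_cancel]
        exact Finset.sum_congr rfl fun α _ => homogeneousComponent_apply_of_mem D α hf
    _ = ∑ β ∈ (decompose 𝒜 (D f)).support, (decompose 𝒜 (D f) β : B) :=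
        (Finset.sum_subset hsupport fun β _ hβ => by
          rw [DFinsupp.notMem_support_iff.1 hβ, ZeroMemClass.coe_zero]).symm
    _ = D f := sum_support_decompose 𝒜 (D f)

theorem sum_homogeneousComponent_apply {A : Finset M} {f : B}
    (hA : degreeSupport 𝒜 D f ⊆ A) :
    (∑ α ∈ A, homogeneousComponent 𝒜 D α) f = D f := by
  classical
  have hsum_apply (g : B) :
      (∑ α ∈ A, homogeneousComponent 𝒜 D α) g = ∑ α ∈ A, homogeneousComponent 𝒜 D α g := by
    rw [← coeFnAddMonoidHom_apply, map_sum, Finset.sum_apply]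
    rfl
  calc (∑ α ∈ A, homogeneousComponent 𝒜 D α) f
      = ∑ m ∈ (decompose 𝒜 f).support,
          ∑ α ∈ A, homogeneousComponent 𝒜 D α (decompose 𝒜 f m) := by
        simp only [← hsum_apply, ← map_sum, sum_support_decompose]
    _ = ∑ m ∈ (decompose 𝒜 f).support, D (decompose 𝒜 f m) :=
        Finset.sum_congr rfl fun m hm =>
          sum_homogeneousComponent_apply_of_mem D (SetLike.coe_mem _) fun β hβ =>
            hA (Finset.mem_biUnion.2 ⟨m, hm, Finset.mem_image.2
              ⟨β, DFinsupp.mem_support_iff.2 hβ, rfl⟩⟩)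
    _ = D f := by rw [← map_sum, sum_support_decompose]

end Support

end Derivation

theorem derivation_decomposes_into_homogeneous_general
    {k B M : Type*} [Field k] [CommRing B] [Algebra k B]
    [AddCommGroup M] [DecidableEq M]
    (𝒜 : M → Submodule k B) [GradedAlgebra 𝒜]
    (hBfg : Algebra.FiniteType k B)
    (D : Derivation k B B) :
    ∃ (A : Finset M) (Dhom : M → Derivation k B B),
      (∀ α ∈ A, ∀ (m : M) (f : B), f ∈ 𝒜 m → Dhom α f ∈ 𝒜 (m + α)) ∧
      D = ∑ α ∈ A, Dhom α := by
  obtain ⟨s, hs⟩ := hBfg.out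
  refine ⟨s.biUnion (Derivation.degreeSupport 𝒜 D), Derivation.homogeneousComponent 𝒜 D,
    fun α _ _ _ hf => Derivation.homogeneousComponent_mem D α hf, ?_⟩
  refine Derivation.ext_of_adjoin_eq_top (s : Set B) hs fun f hf => ?_
  exact (Derivation.sum_homogeneousComponent_apply 𝒜 D (Finset.subset_biUnion_of_mem _ hf)).symm

/-- Every derivation of a finitely generated `S`-graded algebra
(`S` a finitely generated cancellative commutative monoid, realized inside its
group of differences `M`) decomposes as a finite sum of `M_S`-homogeneous
derivations. -/
theorem derivation_decomposes_into_homogeneous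
    {k B M : Type*} [Field k] [CharZero k] [CommRing B] [Algebra k B]
    [AddCommGroup M] [DecidableEq M] (S : AddSubmonoid M) (hSfg : S.FG)
    (hgen : ∀ x : M, ∃ a ∈ S, ∃ b ∈ S, x = a - b)
    (𝒜 : M → Submodule k B) [GradedAlgebra 𝒜]
    (hsupp : ∀ m : M, m ∉ S → 𝒜 m = ⊥)
    (hBfg : Algebra.FiniteType k B)
    (D : Derivation k B B) :
    ∃ (A : Finset M) (Dhom : M → Derivation k B B),
      (∀ α ∈ A, ∀ (m : M) (f : B), f ∈ 𝒜 m → Dhom α f ∈ 𝒜 (m + α)) ∧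
      D = ∑ α ∈ A, Dhom α :=
  derivation_decomposes_into_homogeneous_general 𝒜 hBfg D
end

section
/- Let S be a finitely generated cancellative commutative monoid with group of differences M, dual group N = Hom(M, ℤ), and dual monoid S* = {u ∈ N : u(m) ≥ 0 for all m ∈ S}. Then the set {m ∈ M : u(m) ≥ 0 for all u ∈ S*} equals the saturation of S in M. -/
/-!
Tensor with `ℚ`. If `m` is not in the saturation of `S`, then `1 ⊗ m` lies outside the rational
cone spanned by `1 ⊗ S`: a rational conic combination of elements of `S` becomes integral after
clearing denominators, and the kernel of `M → ℚ ⊗ M` is torsion. This cone is finitely generated,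
so Farkas' lemma (proved by Fourier–Motzkin elimination) gives a functional `φ ≥ 0` on it with
`φ (1 ⊗ m) < 0`. As `M` is finitely generated, a positive multiple of `φ` restricted to `M` is
integral, and it is an element of `S*` that is negative at `m`.
-/

open Set PointedCone TensorProduct

namespace PointedCone

variable {𝕜 V : Type*} [Field 𝕜] [LinearOrder 𝕜] [IsStrictOrderedRing 𝕜]
  [AddCommGroup V] [Module 𝕜 V]

theorem mem_hull_range_or_exists_dual_neg :
    ∀ {n : ℕ} (v : Fin n → V) (b : V),
      b ∈ hull 𝕜 (range v) ∨ ∃ φ : Module.Dual 𝕜 V, (∀ i, 0 ≤ φ (v i)) ∧ φ b < 0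
  | 0, v, b => by
    by_cases hb : b = 0
    · exact .inl (hb ▸ zero_mem _)
    · obtain ⟨φ, hφ⟩ : ∃ φ : Module.Dual 𝕜 V, φ b ≠ 0 := by
        by_contra! h
        exact hb ((Module.forall_dual_apply_eq_zero_iff 𝕜 b).mp h)
      refine .inr ?_
      rcases hφ.lt_or_gt with h | h
      · exact ⟨φ, finZeroElim, h⟩
      · exact ⟨-φ, finZeroElim, by simpa using h⟩
  | n + 1, v, b => by
    rw [← Fin.cons_self_tail v, Fin.range_cons]
    simp only [Fin.forall_fin_succ, Fin.cons_zero, Fin.cons_succ]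
    set a := v 0
    set t := Fin.tail v
    rcases mem_hull_range_or_exists_dual_neg t b with hb | ⟨φ, hφt, hφb⟩
    · exact .inl (Submodule.span_mono (subset_insert _ _) hb)
    rcases le_or_gt 0 (φ a) with ha | ha
    · exact .inr ⟨φ, ⟨ha, hφt⟩, hφb⟩
    -- Fourier–Motzkin: eliminate `a` by projecting along it onto `ker φ`.
    let π : V →ₗ[𝕜] V := LinearMap.id - (φ a)⁻¹ • φ.smulRight a
    have hπ : ∀ x, π x = x - (φ x / φ a) • a := fun x => by simp [π, div_eq_inv_mul, mul_smul]
    rcases mem_hull_range_or_exists_dual_neg (π ∘ t) (π b) with hb' | ⟨ψ, hψt, hψb⟩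
    · refine .inl ?_
      have hsub : hull 𝕜 (range (π ∘ t)) ≤ hull 𝕜 (insert a (range t)) := by
        refine Submodule.span_le.mpr ?_
        rintro _ ⟨i, rfl⟩
        rw [Function.comp_apply, hπ, sub_eq_add_neg, ← neg_smul]
        exact add_mem (subset_hull (mem_insert_of_mem _ ⟨i, rfl⟩))
          (smul_mem _ (neg_nonneg.mpr (div_nonpos_of_nonneg_of_nonpos (hφt i) ha.le))
            (subset_hull (mem_insert _ _)))
      have hb_eq : b = π b + (φ b / φ a) • a := by rw [hπ]; abel
      rw [hb_eq]
      exact add_mem (hsub hb')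
        (smul_mem _ (div_pos_of_neg_of_neg hφb ha).le (subset_hull (mem_insert _ _)))
    · refine .inr ⟨ψ ∘ₗ π, ⟨?_, hψt⟩, hψb⟩
      simp [hπ, div_self ha.ne]

theorem exists_dual_neg_of_fg_of_notMem {C : PointedCone 𝕜 V} (hC : C.FG) {b : V} (hb : b ∉ C) :
    ∃ φ : Module.Dual 𝕜 V, (∀ x ∈ C, 0 ≤ φ x) ∧ φ b < 0 := by
  obtain ⟨s, rfl⟩ := hC
  obtain ⟨n, v, -, hv⟩ := s.finite_toSet.fin_param
  rw [← hv] at hb ⊢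
  obtain ⟨φ, hφv, hφb⟩ := (mem_hull_range_or_exists_dual_neg v b).resolve_left hb
  have hle : hull 𝕜 (range v) ≤ (positive 𝕜 𝕜).comap φ :=
    Submodule.span_le.mpr (range_subset_iff.mpr hφv)
  exact ⟨φ, fun x hx => hle hx, hφb⟩

end PointedCone

theorem PointedCone.fg_hull_image_of_fg {R M V : Type*} [Semiring R] [PartialOrder R]
    [IsOrderedRing R] [AddCommMonoid M] [AddCommMonoid V] [Module R V] (f : M →+ V)
    {S : AddSubmonoid M} (hS : S.FG) : (hull R (f '' S)).FG := by
  obtain ⟨F, rfl⟩ := hS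
  rw [← AddSubmonoid.coe_map, AddMonoidHom.map_mclosure, hull, Submodule.span_closure]
  exact Submodule.fg_span (F.finite_toSet.image f)

theorem AddSubmonoid.FG.addGroupFG_of_forall_eq_sub {M : Type*} [AddCommGroup M]
    {S : AddSubmonoid M} (hS : S.FG) (h : ∀ x : M, ∃ a ∈ S, ∃ b ∈ S, x = a - b) :
    AddGroup.FG M := by
  obtain ⟨F, rfl⟩ := hS
  refine ⟨⟨F, eq_top_iff.mpr fun x _ => ?_⟩⟩
  obtain ⟨a, ha, b, hb, rfl⟩ := h x
  have hle := AddSubgroup.le_closure_toAddSubmonoid (F : Set M)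
  exact sub_mem (hle ha) (hle hb)

theorem AddMonoidHom.exists_intCast_eq_pos_mul {M : Type*} [AddCommGroup M] [AddGroup.FG M]
    (g : M →+ ℚ) : ∃ d : ℕ, 0 < d ∧ ∃ u : M →+ ℤ, ∀ x, (u x : ℚ) = d * g x := by
  obtain ⟨F, hF⟩ := AddGroup.FG.out (H := M)
  refine ⟨∏ x ∈ F, (g x).den, Finset.prod_pos fun x _ => (g x).pos, ?_⟩
  set d := ∏ x ∈ F, (g x).den
  have hrange : (d • g).range ≤ (Int.castAddHom ℚ).range := by
    rw [AddMonoidHom.range_eq_map, ← hF, AddMonoidHom.map_closure, AddSubgroup.closure_le]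
    rintro _ ⟨x, hx, rfl⟩
    obtain ⟨e, he⟩ := Finset.dvd_prod_of_mem (fun x => (g x).den) hx
    refine ⟨e * (g x).num, ?_⟩
    simp only [Int.coe_castAddHom, Int.cast_mul, Int.cast_natCast, AddMonoidHom.nsmul_apply,
      nsmul_eq_mul]
    rw [show d = (g x).den * e from he, ← Rat.den_mul_eq_num]
    push_cast
    ring
  let e := AddMonoidHom.ofInjective (f := Int.castAddHom ℚ) Int.cast_injective
  let dg := (d • g).codRestrict _ fun x => hrange ⟨x, rfl⟩
  exact ⟨(e.symm : _ →+ ℤ).comp dg, fun x => congrArg Subtype.val (e.apply_symm_apply (dg x))⟩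

section Rationalization

variable {M : Type*} [AddCommGroup M]

theorem exists_pos_nsmul_eq_zero_of_one_tmul_eq_zero {x : M} (h : (1 : ℚ) ⊗ₜ[ℤ] x = 0) :
    ∃ k : ℕ, 0 < k ∧ k • x = 0 := by
  obtain ⟨⟨k, hk⟩, hkx⟩ :=
    (IsLocalizedModule.eq_zero_iff (nonZeroDivisors ℤ) (TensorProduct.mk ℤ ℚ M 1)).mp h
  refine ⟨k.natAbs, Int.natAbs_pos.mpr (nonZeroDivisors.ne_zero hk), ?_⟩
  rcases Int.natAbs_eq k with hk' | hk'
  · rw [Submonoid.mk_smul, hk', natCast_zsmul] at hkx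
    exact hkx
  · rw [Submonoid.mk_smul, hk', neg_smul, neg_eq_zero, natCast_zsmul] at hkx
    exact hkx

theorem exists_pos_nsmul_eq_one_tmul_of_mem_hull {S : AddSubmonoid M} {v : ℚ ⊗[ℤ] M}
    (hv : v ∈ hull ℚ (TensorProduct.mk ℤ ℚ M 1 '' S)) :
    ∃ n : ℕ, 0 < n ∧ ∃ s ∈ S, n • v = (1 : ℚ) ⊗ₜ s := by
  induction hv using Submodule.span_induction with
  | mem v hv =>
    obtain ⟨s, hs, rfl⟩ := hv
    exact ⟨1, one_pos, s, hs, one_smul _ _⟩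
  | zero => exact ⟨1, one_pos, 0, S.zero_mem, by simp⟩
  | add v w _ _ hv hw =>
    obtain ⟨n, hn, s, hs, hns⟩ := hv
    obtain ⟨n', hn', s', hs', hns'⟩ := hw
    refine ⟨n * n', mul_pos hn hn', n' • s + n • s', add_mem (nsmul_mem hs n') (nsmul_mem hs' n), ?_⟩
    calc (n * n') • (v + w) = n' • (n • v) + n • (n' • w) := by
          rw [smul_add, mul_smul, smul_comm n n', mul_smul]
      _ = _ := by rw [hns, hns', tmul_add, tmul_smul, tmul_smul]
  | smul c v _ hv =>
    obtain ⟨n, hn, s, hs, hns⟩ := hv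
    obtain ⟨a, b, hb, hab⟩ : ∃ a b : ℕ, 0 < b ∧ (b : ℚ) * (c : ℚ) = a :=
      ⟨_, _, NNRat.den_pos ⟨c, c.2⟩, congrArg ((↑) : ℚ≥0 → ℚ) (NNRat.den_mul_eq_num ⟨c, c.2⟩)⟩
    refine ⟨b * n, mul_pos hb hn, a • s, nsmul_mem hs a, ?_⟩
    calc (b * n) • (c • v) = n • ((b : ℚ) * c) • v := by
          rw [mul_comm, mul_smul, mul_smul, Nat.cast_smul_eq_nsmul]; rfl
      _ = _ := by rw [hab, Nat.cast_smul_eq_nsmul, smul_comm, hns, tmul_smul]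

theorem exists_pos_nsmul_mem_of_one_tmul_mem_hull {S : AddSubmonoid M} {m : M}
    (hm : (1 : ℚ) ⊗ₜ[ℤ] m ∈ hull ℚ (TensorProduct.mk ℤ ℚ M 1 '' S)) :
    ∃ c : ℕ, 0 < c ∧ c • m ∈ S := by
  obtain ⟨n, hn, s, hs, hns⟩ := exists_pos_nsmul_eq_one_tmul_of_mem_hull hm
  obtain ⟨k, hk, hks⟩ : ∃ k : ℕ, 0 < k ∧ k • (n • m - s) = 0 :=
    exists_pos_nsmul_eq_zero_of_one_tmul_eq_zero (by rw [tmul_sub, tmul_smul, hns, sub_self])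
  refine ⟨k * n, mul_pos hk hn, ?_⟩
  rw [smul_sub, sub_eq_zero, ← mul_smul] at hks
  exact hks ▸ nsmul_mem hs k

end Rationalization

/-- For a finitely generated cancellative commutative monoid `S`
inside its group of differences `M`, the set of elements of `M` that are
nonnegative on the dual monoid `S* ⊆ Hom(M,ℤ)` equals the saturation of `S`. -/
theorem dual_dual_eq_saturation
    {M : Type*} [AddCommGroup M] (S : AddSubmonoid M) (hSfg : S.FG)
    (hgen : ∀ x : M, ∃ a ∈ S, ∃ b ∈ S, x = a - b) :
    {m : M | ∀ u : M →+ ℤ, (∀ s ∈ S, 0 ≤ u s) → 0 ≤ u m}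
      = {m : M | ∃ c : ℕ, 0 < c ∧ c • m ∈ S} := by
  ext m
  refine ⟨fun hm => ?_, fun ⟨c, hc, hcm⟩ u hu => ?_⟩
  · by_contra hsat
    let f := TensorProduct.mk ℤ ℚ M 1
    have hcone : f m ∉ hull ℚ (f '' S) := fun h => hsat (exists_pos_nsmul_mem_of_one_tmul_mem_hull h)
    obtain ⟨φ, hφS, hφm⟩ :=
      exists_dual_neg_of_fg_of_notMem (fg_hull_image_of_fg f.toAddMonoidHom hSfg) hcone
    have := hSfg.addGroupFG_of_forall_eq_sub hgen
    obtain ⟨d, hd, u, hu⟩ :=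
      ((φ.restrictScalars ℤ).comp f).toAddMonoidHom.exists_intCast_eq_pos_mul
    have hsign : ∀ x, 0 ≤ u x ↔ 0 ≤ φ (f x) := fun x => by
      rw [← Int.cast_nonneg_iff (R := ℚ), hu, mul_nonneg_iff_of_pos_left (by exact_mod_cast hd)]
      rfl
    exact hφm.not_ge <| (hsign m).mp <|
      hm u fun s hs => (hsign s).mpr (hφS _ (subset_hull ⟨s, hs, rfl⟩))
  · have := hu _ hcm
    rw [map_nsmul, nsmul_eq_mul] at this
    exact nonneg_of_mul_nonneg_right this (by exact_mod_cast hc)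
end

section
/- Let S be a finitely generated cancellative commutative monoid with group M and saturation S^sat. If α ∈ M with α ∉ S^sat, then for every m ∈ S there exists a positive integer ℓ such that m + ℓα ∉ S. -/
/-! Write the elements of `S` as `ℕ`-combinations of finitely many generators. By Dickson's lemma,
among the coefficient vectors of `m + α, m + 2α, m + 3α, …` (all in `S` if the claim fails) one is
dominated coordinatewise by a later one; the difference of the two elements, a positive multiple
of `α`, is then the combination with the difference coefficients, hence lies in `S`. -/

theorem AddSubmonoid.FG.exists_lt_eq_add_mem {M : Type*} [AddCommMonoid M] {S : AddSubmonoid M}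
    (hS : S.FG) {x : ℕ → M} (hx : ∀ n, x n ∈ S) :
    ∃ i j, i < j ∧ ∃ d ∈ S, x j = x i + d := by
  obtain ⟨T, rfl⟩ := hS
  choose a ha using fun n ↦ AddSubmonoid.mem_closure_finset'.1 (hx n)
  obtain ⟨i, j, hij, hle⟩ := wellQuasiOrdered_le a
  refine ⟨i, j, hij, ∑ t : T, (a j t - a i t) • (t : M),
    AddSubmonoid.sum_mem _ fun t _ ↦ nsmul_mem (AddSubmonoid.subset_closure t.2) _, ?_⟩
  rw [ha i, ha j, ← Finset.sum_add_distrib]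
  refine Finset.sum_congr rfl fun t _ ↦ ?_
  rw [← add_nsmul, Nat.add_sub_cancel' (hle t)]

theorem exists_multiple_escaping_monoid_general
    {M : Type*} [AddCommGroup M] (S : AddSubmonoid M) (hSfg : S.FG)
    (α : M) (hα : ¬ ∃ c : ℕ, 0 < c ∧ c • α ∈ S) :
    ∀ m ∈ S, ∃ ℓ : ℕ, 0 < ℓ ∧ m + ℓ • α ∉ S := by
  intro m _
  by_contra! hstay
  obtain ⟨i, j, hij, d, hd, hji⟩ :=
    hSfg.exists_lt_eq_add_mem (x := fun n ↦ m + (n + 1) • α) fun n ↦ hstay _ n.succ_pos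
  have hsplit : m + (j + 1) • α = m + (i + 1) • α + (j - i) • α := by
    rw [add_assoc, ← add_nsmul]
    congr 2
    omega
  have hd_eq : (j - i) • α = d := add_left_cancel (hsplit.symm.trans hji)
  exact hα ⟨j - i, Nat.sub_pos_of_lt hij, hd_eq ▸ hd⟩

/-- If `α ∈ M = M_S` is not in the saturation of the finitely
generated cancellative commutative monoid `S`, then for every `m ∈ S` there is
a positive integer `ℓ` with `m + ℓ•α ∉ S`. -/
theorem exists_multiple_escaping_monoid
    {M : Type*} [AddCommGroup M] (S : AddSubmonoid M) (hSfg : S.FG)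
    (hgen : ∀ x : M, ∃ a ∈ S, ∃ b ∈ S, x = a - b)
    (α : M) (hα : ¬ ∃ c : ℕ, 0 < c ∧ c • α ∈ S) :
    ∀ m ∈ S, ∃ ℓ : ℕ, 0 < ℓ ∧ m + ℓ • α ∉ S :=
  exists_multiple_escaping_monoid_general S hSfg α hα
end

section
/- Let S be a numerical monoid different from ℤ_{≥0} (i.e., a submonoid S ⊆ ℤ_{≥0} with ℤ_{≥0} \ S finite and nonempty). Then S has no Demazure roots: R(S) = ∅. -/
/-- The dual monoid `S* = {u ∈ Hom(M,ℤ) : u(m) ≥ 0 for all m ∈ S}`. -/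
def dualMonoid {M : Type*} [AddCommGroup M] (S : AddSubmonoid M) :
    AddSubmonoid (M →+ ℤ) where
  carrier := {u | ∀ m ∈ S, 0 ≤ u m}
  zero_mem' := fun m _ => by simp
  add_mem' := fun {u v} hu hv m hm => by
    simpa using add_nonneg (hu m hm) (hv m hm)

/-- `F` is a face of the commutative monoid `S`: a submonoid such that
`a + b ∈ F` with `a, b ∈ S` forces `a, b ∈ F`. -/
def IsMonoidFace {M : Type*} [AddCommMonoid M] (F S : AddSubmonoid M) : Prop :=
  F ≤ S ∧ ∀ a ∈ S, ∀ b ∈ S, a + b ∈ F → a ∈ F ∧ b ∈ F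

/-- `ρ` is the primitive generator of a ray of the dual monoid `S*`,
i.e. the submonoid generated by `ρ` is a face of `S*` isomorphic to `ℤ≥0`. -/
def IsRayGen {M : Type*} [AddCommGroup M] (S : AddSubmonoid M) (ρ : M →+ ℤ) : Prop :=
  ρ ≠ 0 ∧ IsMonoidFace (AddSubmonoid.closure {ρ}) (dualMonoid S)

/-- `α ∈ M = M_S` is a Demazure root of the cancellative monoid `S` with
distinguished ray `ρ ∈ S*(1)`. -/
def IsDemazureRoot {M : Type*} [AddCommGroup M] (S : AddSubmonoid M)
    (ρ : M →+ ℤ) (α : M) : Prop :=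
  IsRayGen S ρ ∧ ρ α = -1 ∧ ∀ m ∈ S, 0 < ρ m → m + α ∈ S

/-! On `ℤ`, `ρ α = -1` forces `ρ = ±id`, and a positive element of `S` rules out `-id`; so a
root is `α = -1` and lets every positive element of `S` step down by one. Stepping down from the
successor of the largest gap lands on that gap. -/

theorem IsRayGen.mem_dualMonoid {M : Type*} [AddCommGroup M] {S : AddSubmonoid M}
    {ρ : M →+ ℤ} (h : IsRayGen S ρ) : ρ ∈ dualMonoid S :=
  h.2.1 (AddSubmonoid.subset_closure rfl)

theorem exists_notMem_add_one_mem_of_finite_gaps {S : Set ℤ}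
    (hfin : {n : ℤ | 0 ≤ n ∧ n ∉ S}.Finite) (hne : {n : ℤ | 0 ≤ n ∧ n ∉ S}.Nonempty) :
    ∃ g, 0 ≤ g ∧ g ∉ S ∧ g + 1 ∈ S := by
  obtain ⟨g, ⟨hg0, hgS⟩, hmax⟩ := Set.exists_max_image _ id hfin hne
  refine ⟨g, hg0, hgS, ?_⟩
  by_contra hg1
  have := hmax (g + 1) ⟨by omega, hg1⟩
  simp only [id] at this
  omega

namespace IsDemazureRoot

variable {S : AddSubmonoid ℤ} {ρ : ℤ →+ ℤ} {α : ℤ}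

theorem map_one_eq_one_and_eq_neg_one (h : IsDemazureRoot S ρ α) {m : ℤ} (hm : m ∈ S)
    (hm0 : 0 < m) : ρ 1 = 1 ∧ α = -1 := by
  have hρα : α * ρ 1 = -1 := by rw [← smul_eq_mul, ← AddMonoidHom.apply_int, h.2.1]
  rcases Int.mul_eq_neg_one_iff_eq_one_or_neg_one.mp hρα with ⟨-, hρ1⟩ | ⟨hα, hρ1⟩
  · have hρm := h.1.mem_dualMonoid m hm
    rw [AddMonoidHom.apply_int, hρ1, smul_eq_mul] at hρm
    omega
  · exact ⟨hρ1, hα⟩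

theorem sub_one_mem (h : IsDemazureRoot S ρ α) {m : ℤ} (hm : m ∈ S) (hm0 : 0 < m) :
    m - 1 ∈ S := by
  obtain ⟨hρ1, rfl⟩ := h.map_one_eq_one_and_eq_neg_one hm hm0
  have hρm : 0 < ρ m := by rwa [AddMonoidHom.apply_int, hρ1, smul_eq_mul, mul_one]
  simpa [sub_eq_add_neg] using h.2.2 m hm hρm

end IsDemazureRoot

theorem numerical_monoid_no_demazure_roots_general
    (S : AddSubmonoid ℤ)
    (hfin : {n : ℤ | 0 ≤ n ∧ n ∉ S}.Finite)
    (hne : {n : ℤ | 0 ≤ n ∧ n ∉ S}.Nonempty) :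
    ∀ (α : ℤ) (ρ : ℤ →+ ℤ), ¬ IsDemazureRoot S ρ α := by
  intro α ρ hroot
  obtain ⟨g, hg0, hgS, hg1S⟩ := exists_notMem_add_one_mem_of_finite_gaps hfin hne
  have hgS' := hroot.sub_one_mem hg1S (by omega)
  exact hgS (by simpa using hgS')

/-- A numerical monoid different from `ℤ≥0` has no Demazure
roots. -/
theorem numerical_monoid_no_demazure_roots
    (S : AddSubmonoid ℤ) (hpos : ∀ m ∈ S, 0 ≤ m)
    (hfin : {n : ℤ | 0 ≤ n ∧ n ∉ S}.Finite)
    (hne : {n : ℤ | 0 ≤ n ∧ n ∉ S}.Nonempty) :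
    ∀ (α : ℤ) (ρ : ℤ →+ ℤ), ¬ IsDemazureRoot S ρ α :=
  numerical_monoid_no_demazure_roots_general S hfin hne
end

section
/- Let S be a cancellative commutative monoid, α ∈ M_S, and ρ ∈ S*(1) with ρ(α) = -1. Let A be a generating set of S. Then (m' + α ∈ S for all m' ∈ S with ρ(m') > 0) if and only if (m + α ∈ S for all m ∈ A with ρ(m) > 0). -/
/-! If `ρ (x + y) > 0` then `ρ x > 0` or `ρ y > 0`, so the root condition for `x + y` follows
from that for `x` (adding `y ∈ S`) or for `y` (adding `x ∈ S`). An induction over the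
generators then reduces the condition on `S` to the condition on a generating set. -/

theorem pos_or_pos_of_add_pos {G : Type*} [AddCommMonoid G] [LinearOrder G]
    [IsOrderedAddMonoid G] {a b : G} (h : 0 < a + b) : 0 < a ∨ 0 < b := by
  contrapose! h
  exact add_nonpos h.1 h.2

namespace AddSubmonoid

variable {M G : Type*} [AddCommMonoid M] [AddCommMonoid G] [LinearOrder G]
  [IsOrderedAddMonoid G]

theorem add_mem_closure_of_pos {A : Set M} {ρ : M →+ G} {α : M}
    (hA : ∀ m ∈ A, 0 < ρ m → m + α ∈ closure A) :
    ∀ m ∈ closure A, 0 < ρ m → m + α ∈ closure A := by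
  intro m hm
  induction hm using closure_induction with
  | mem x hx => exact hA x hx
  | zero => simp
  | add x y hx hy ihx ihy =>
    intro hxy
    rw [map_add] at hxy
    rcases pos_or_pos_of_add_pos hxy with hx0 | hy0
    · rw [add_right_comm]
      exact add_mem (ihx hx0) hy
    · rw [add_assoc]
      exact add_mem hx (ihy hy0)

end AddSubmonoid

theorem demazure_root_condition_on_generators_general
    {M : Type*} [AddCommGroup M] (S : AddSubmonoid M) (A : Set M)
    (hA : AddSubmonoid.closure A = S)
    (ρ : M →+ ℤ) (α : M) :
    (∀ m' ∈ S, 0 < ρ m' → m' + α ∈ S) ↔ (∀ m ∈ A, 0 < ρ m → m + α ∈ S) := by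
  subst hA
  exact ⟨fun h m hm => h m (AddSubmonoid.subset_closure hm),
    AddSubmonoid.add_mem_closure_of_pos⟩

/-- For a cancellative monoid `S` generated by `A`, a candidate
root `α` (with `ρ ∈ S*(1)` and `ρ(α) = -1`) satisfies the root condition on
all of `S` iff it satisfies it on the generating set `A`. -/
theorem demazure_root_condition_on_generators
    {M : Type*} [AddCommGroup M] (S : AddSubmonoid M) (A : Set M)
    (hA : AddSubmonoid.closure A = S)
    (ρ : M →+ ℤ) (hρ : IsRayGen S ρ) (α : M) (hα : ρ α = -1) :
    (∀ m' ∈ S, 0 < ρ m' → m' + α ∈ S) ↔ (∀ m ∈ A, 0 < ρ m → m + α ∈ S) :=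
  demazure_root_condition_on_generators_general S A hA ρ α
end

section
/- The Demazure roots of the monoid S = ℤ_{≥0} × ℤ/2ℤ are exactly (-1, 0̄) and (-1, 1̄) in M = ℤ × ℤ/2ℤ. -/
/-- The monoid `S = ℤ≥0 × ℤ/2ℤ` inside `M = ℤ × ℤ/2ℤ`. -/
def Smon : AddSubmonoid (ℤ × ZMod 2) where
  carrier := {p | 0 ≤ p.1}
  zero_mem' := by simp [Set.mem_setOf_eq]
  add_mem' := fun {a b} ha hb => by
    have h : (0:ℤ) ≤ a.1 + b.1 := add_nonneg ha hb
    simpa [Set.mem_setOf_eq] using h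


/-!
A homomorphism `ℤ × ℤ/2ℤ → ℤ` kills the torsion, so it is `c • pr₁` with `c = u (1, 0)`;
it lies in `S*` iff `c ≥ 0`, hence `S* = ℤ≥0 • pr₁` is generated by the ray `pr₁`.
For any ray generator `ρ = c • pr₁` the equation `ρ α = c α₁ = -1` forces `c = 1` and `α₁ = -1`;
conversely `α₁ = -1` makes `α` a root for `pr₁`, since `m₁ > 0` gives `m₁ - 1 ≥ 0`.
-/

theorem AddMonoidHom.eq_smul_fst_of_finite {G : Type*} [AddCommGroup G] [Finite G]
    (u : ℤ × G →+ ℤ) : u = u (1, 0) • AddMonoidHom.fst ℤ G := by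
  ext p
  have hkill : u (0, p.2) = 0 :=
    ((u.comp (AddMonoidHom.inr ℤ G)).isOfFinAddOrder (isOfFinAddOrder_of_finite p.2)).eq_zero'
  have hsplit : p = p.1 • ((1, 0) : ℤ × G) + (0, p.2) := by ext <;> simp
  conv_lhs => rw [hsplit, map_add, map_zsmul, hkill]
  simp [mul_comm]

theorem IsMonoidFace.refl {M : Type*} [AddCommMonoid M] (S : AddSubmonoid M) :
    IsMonoidFace S S :=
  ⟨le_rfl, fun _ ha _ hb _ => ⟨ha, hb⟩⟩

theorem mem_Smon_iff {p : ℤ × ZMod 2} : p ∈ Smon ↔ 0 ≤ p.1 := Iff.rfl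

theorem mem_dualMonoid_Smon_iff {u : ℤ × ZMod 2 →+ ℤ} :
    u ∈ dualMonoid Smon ↔ 0 ≤ u (1, 0) := by
  refine ⟨fun hu => hu (1, 0) (mem_Smon_iff.mpr zero_le_one), fun hc m hm => ?_⟩
  rw [u.eq_smul_fst_of_finite]
  simpa using mul_nonneg hc (mem_Smon_iff.mp hm)

theorem dualMonoid_Smon_eq_closure_fst :
    dualMonoid Smon = AddSubmonoid.closure {AddMonoidHom.fst ℤ (ZMod 2)} := by
  ext u
  rw [mem_dualMonoid_Smon_iff, AddSubmonoid.mem_closure_singleton]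
  constructor
  · intro hc
    refine ⟨(u (1, 0)).toNat, ?_⟩
    rw [← natCast_zsmul, Int.toNat_of_nonneg hc]
    exact u.eq_smul_fst_of_finite.symm
  · rintro ⟨n, rfl⟩
    simp

theorem isRayGen_Smon_fst : IsRayGen Smon (AddMonoidHom.fst ℤ (ZMod 2)) := by
  refine ⟨fun h => ?_, dualMonoid_Smon_eq_closure_fst ▸ IsMonoidFace.refl _⟩
  simpa using DFunLike.congr_fun h (1, 0)

theorem IsDemazureRoot.fst_eq_neg_one_of_Smon {ρ : ℤ × ZMod 2 →+ ℤ} {α : ℤ × ZMod 2}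
    (h : IsDemazureRoot Smon ρ α) : α.1 = -1 := by
  obtain ⟨⟨-, hclosure, -⟩, hα, -⟩ := h
  have hc : 0 ≤ ρ (1, 0) :=
    mem_dualMonoid_Smon_iff.mp (hclosure (AddSubmonoid.subset_closure rfl))
  have hprod : ρ (1, 0) * α.1 = -1 := by
    rw [← hα, ρ.eq_smul_fst_of_finite]
    simp
  rcases Int.eq_one_or_neg_one_of_mul_eq_neg_one' hprod with ⟨-, h⟩ | ⟨hneg, -⟩
  · exact h
  · omega

theorem isDemazureRoot_Smon_fst {α : ℤ × ZMod 2} (hα : α.1 = -1) :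
    IsDemazureRoot Smon (AddMonoidHom.fst ℤ (ZMod 2)) α := by
  refine ⟨isRayGen_Smon_fst, hα, fun m _ hpos => ?_⟩
  rw [mem_Smon_iff, Prod.fst_add, hα]
  simp only [AddMonoidHom.coe_fst] at hpos
  omega

theorem exists_isDemazureRoot_Smon_iff (α : ℤ × ZMod 2) :
    (∃ ρ, IsDemazureRoot Smon ρ α) ↔ α.1 = -1 :=
  ⟨fun ⟨_, h⟩ => h.fst_eq_neg_one_of_Smon, fun h => ⟨_, isDemazureRoot_Smon_fst h⟩⟩

/-- The Demazure roots of `S = ℤ≥0 × ℤ/2ℤ` are exactly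
`(-1, 0̄)` and `(-1, 1̄)`. -/
theorem demazure_roots_of_Zgeq0_times_Zmod2 (α : ℤ × ZMod 2) :
    (∃ ρ : (ℤ × ZMod 2) →+ ℤ, IsDemazureRoot Smon ρ α) ↔
      α = (-1, 0) ∨ α = (-1, 1) := by
  rw [exists_isDemazureRoot_Smon_iff]
  have hsnd : α.2 = 0 ∨ α.2 = 1 := by generalize α.2 = b; decide +revert
  simp only [Prod.ext_iff, ← and_or_left, hsnd, and_true]
end

section
/- Let S be a cancellative commutative monoid over a field k of characteristic zero, and ∂ : k[S] → k[S] a homogeneous locally nilpotent derivation. If ∂(f·χ^m) = 0 for some nonzero f ∈ k[S] and m ∈ S, then ∂(χ^m) = 0 and ∂(f) = 0. -/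
/-!
Let `i` and `j` be the largest exponents with `D^i f ≠ 0` and `D^j χ^m ≠ 0`. By the general
Leibniz rule only one term of `D^(i+j) (f χ^m)` survives, namely `C(i+j, i) D^i f · D^j χ^m`.
Homogeneity makes `D^j χ^m` a nonzero monomial, hence a non-zero-divisor, and in characteristic
zero the binomial coefficient is a unit, so this term is nonzero. Since `D (f χ^m) = 0`, this
forces `j = 0`, i.e. `D χ^m = 0`; then `D (f χ^m) = D f · χ^m = 0` gives `D f = 0`.
-/

open Finset

theorem Function.exists_iterate_ne_and_iterate_succ_eq {α : Type*} {g : α → α} {x z : α}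
    (hx : x ≠ z) {n : ℕ} (hn : g^[n] x = z) : ∃ i, g^[i] x ≠ z ∧ g^[i + 1] x = z := by
  induction n with
  | zero => exact absurd hn hx
  | succ n ih =>
    by_cases h : g^[n] x = z
    · exact ih h
    · exact ⟨n, h, hn⟩

namespace AddMonoidAlgebra

theorem eq_zero_of_mul_single_eq_zero {k G : Type*} [Semiring k] [NoZeroDivisors k] [Add G]
    [IsRightCancelAdd G] {f : AddMonoidAlgebra k G} {m : G} {c : k} (hc : c ≠ 0)
    (h : f * single m c = 0) : f = 0 := by
  have hsupp := support_coeff_mul_single f c (fun y => by simp [hc]) m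
  rw [h, coeff_zero, Finsupp.support_zero, eq_comm, map_eq_empty, Finsupp.support_eq_empty,
    coeff_eq_zero] at hsupp
  exact hsupp

theorem exists_iterate_single_eq_single {k G : Type*} [CommSemiring k]
    [AddCommMonoid G] (D : Derivation k (AddMonoidAlgebra k G) (AddMonoidAlgebra k G))
    (hD : ∀ m : G, ∃ (m' : G) (c : k), D (single m (1 : k)) = single m' c) (n : ℕ) (m : G)
    (c : k) : ∃ (m' : G) (c' : k), D^[n] (single m c) = single m' c' := by
  induction n generalizing m c with
  | zero => exact ⟨m, c, rfl⟩
  | succ n ih =>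
    obtain ⟨m', c', hm'⟩ := hD m
    obtain ⟨m'', c'', hm''⟩ := ih m' (c * c')
    refine ⟨m'', c'', ?_⟩
    rw [Function.iterate_succ_apply, ← mul_one c, ← smul_eq_mul, ← smul_single, D.map_smul, hm',
      smul_single, smul_eq_mul, hm'']

end AddMonoidAlgebra

namespace Derivation

variable {R A : Type*} [CommSemiring R] [CommSemiring A] [Algebra R A] (D : Derivation R A A)

theorem iterate_apply_mul (n : ℕ) (a b : A) :
    D^[n] (a * b) = ∑ ij ∈ antidiagonal n, n.choose ij.1 • (D^[ij.1] a * D^[ij.2] b) := by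
  induction n with
  | zero => simp
  | succ n ih =>
    rw [sum_antidiagonal_choose_succ_nsmul (fun i j => D^[i] a * D^[j] b) n]
    simp only [Function.iterate_succ_apply', ih, map_sum, map_nsmul, leibniz, smul_eq_mul,
      smul_add, sum_add_distrib]
    congr 1
    refine sum_congr rfl fun ⟨i, j⟩ hij => ?_
    rw [n.choose_symm_of_eq_add (HasAntidiagonal.mem_antidiagonal.1 hij).symm, mul_comm]

theorem iterate_eq_zero_of_le {a : A} {i j : ℕ} (ha : D^[i] a = 0) (hij : i ≤ j) :
    D^[j] a = 0 := by
  rw [← Nat.sub_add_cancel hij, Function.iterate_add_apply, ha, iterate_map_zero]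

theorem iterate_add_apply_mul_of_iterate_succ_eq_zero {a b : A} {i j : ℕ}
    (ha : D^[i + 1] a = 0) (hb : D^[j + 1] b = 0) :
    D^[i + j] (a * b) = (i + j).choose i • (D^[i] a * D^[j] b) := by
  rw [iterate_apply_mul]
  refine sum_eq_single (i, j) (fun ⟨p, q⟩ hpq hne => ?_) (by simp)
  rw [HasAntidiagonal.mem_antidiagonal] at hpq
  rcases lt_or_gt_of_ne (show p ≠ i by grind) with hp | hp
  · rw [D.iterate_eq_zero_of_le hb (by omega), mul_zero, smul_zero]
  · rw [D.iterate_eq_zero_of_le ha hp, zero_mul, smul_zero]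

end Derivation

open AddMonoidAlgebra in
/-- For a homogeneous locally nilpotent derivation `D` on the
semigroup algebra of a cancellative commutative monoid `S`, if
`D(f·χ^m) = 0` with `f ≠ 0`, then `D(χ^m) = 0` and `D(f) = 0`. -/
theorem homogeneous_lnd_kernel_factorially_closed_on_monomials
    {k S : Type*} [Field k] [CharZero k] [AddCancelCommMonoid S]
    (D : Derivation k (AddMonoidAlgebra k S) (AddMonoidAlgebra k S))
    (hhom : ∀ m : S, ∃ (m' : S) (c : k),
      D (AddMonoidAlgebra.single m (1 : k)) = AddMonoidAlgebra.single m' c)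
    (hlnd : ∀ f : AddMonoidAlgebra k S, ∃ n : ℕ, (⇑D)^[n] f = 0)
    (f : AddMonoidAlgebra k S) (hf : f ≠ 0) (m : S)
    (h : D (f * AddMonoidAlgebra.single m (1 : k)) = 0) :
    D (AddMonoidAlgebra.single m (1 : k)) = 0 ∧ D f = 0 := by
  obtain ⟨M, hM⟩ := hlnd f
  obtain ⟨N, hN⟩ := hlnd (single m 1)
  obtain ⟨i, hfi, hfi'⟩ := Function.exists_iterate_ne_and_iterate_succ_eq hf hM
  obtain ⟨j, huj, huj'⟩ := Function.exists_iterate_ne_and_iterate_succ_eq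
    (single_ne_zero.mpr one_ne_zero) hN
  have hDu : D (single m 1) = 0 := by
    obtain _ | j := j
    · exact huj'
    obtain ⟨m', c, hc⟩ := exists_iterate_single_eq_single D hhom (j + 1) m 1
    have hc0 : c ≠ 0 := by rintro rfl; exact huj (by simpa using hc)
    have hprod := D.iterate_add_apply_mul_of_iterate_succ_eq_zero hfi' huj'
    rw [← add_assoc, Function.iterate_succ_apply, h, iterate_map_zero, hc, eq_comm,
      smul_eq_zero] at hprod
    exact (hfi (eq_zero_of_mul_single_eq_zero hc0
      (hprod.resolve_left (Nat.choose_pos (by omega)).ne'))).elim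
  refine ⟨hDu, eq_zero_of_mul_single_eq_zero (m := m) one_ne_zero ?_⟩
  simpa [D.leibniz, hDu, mul_comm] using h
end

section
/- Let S be a cancellative commutative monoid over an algebraically closed field k of characteristic zero, and let ∂ : k[S] → k[S] be a nonzero homogeneous locally nilpotent derivation of degree α. Then α is a Demazure root of S and ∂ = λ∂_α for some λ ∈ k*, where ∂_α(χ^m) = ρ(m)χ^{m+α} for the distinguished ray ρ of α. -/
/-! Homogeneity of degree `α` means `∂ χ^m = c(m) χ^{m+α}`, with `c(m) = 0` when `m + α ∉ S`, and
the Leibniz rule makes `c : S → k` additive. Extend it to `ĉ : M →+ k` and put `λ = -ĉ(α)`. Local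
nilpotency forces the chain `χ^m, ∂χ^m, ∂²χ^m, …` to die, and since `c(m + α) = c(m) - λ` this gives
`c(m) = pλ` with `p ∈ ℕ`. Hence `ĉ = λρ` for some `ρ : M →+ ℤ` that is nonnegative on `S`, with
`ρ(α) = -1` and `m + α ∈ S` whenever `ρ(m) > 0`. Such a `ρ` spans a ray of `S*`: walking from `m` to
`m + ρ(m)α ∈ ker ρ` shows that any `u ∈ S*` vanishing on `S ∩ ker ρ` equals `-u(α) ρ`. -/

section GroupOfDifferences

variable {M G : Type*} [AddCommGroup M] [AddCommGroup G] {S : AddSubmonoid M}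

theorem AddMonoidHom.ext_of_forall_eq_sub (hgen : ∀ x : M, ∃ a ∈ S, ∃ b ∈ S, x = a - b)
    {f g : M →+ G} (h : ∀ m ∈ S, f m = g m) : f = g := by
  ext x
  obtain ⟨a, ha, b, hb, rfl⟩ := hgen x
  rw [map_sub, map_sub, h a ha, h b hb]

theorem AddMonoidHom.exists_extend_of_forall_eq_sub (hgen : ∀ x : M, ∃ a ∈ S, ∃ b ∈ S, x = a - b)
    (f : S →+ G) : ∃ F : M →+ G, ∀ m : S, F m = f m := by
  choose a ha b hb hab using hgen
  let F₀ : M → G := fun x ↦ f ⟨a x, ha x⟩ - f ⟨b x, hb x⟩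
  have hF₀ : ∀ (x : M) (c d : S), x = c - d → F₀ x = f c - f d := by
    intro x c d hx
    have hS : (⟨a x, ha x⟩ : S) + d = c + ⟨b x, hb x⟩ :=
      Subtype.ext (sub_eq_sub_iff_add_eq_add.mp ((hab x).symm.trans hx))
    rw [sub_eq_sub_iff_add_eq_add, ← map_add, ← map_add, hS]
  refine ⟨AddMonoidHom.mk' F₀ fun x y ↦ ?_, fun m ↦ ?_⟩
  · rw [hF₀ (x + y) (⟨a x, ha x⟩ + ⟨a y, ha y⟩) (⟨b x, hb x⟩ + ⟨b y, hb y⟩)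
      (by push_cast; rw [add_sub_add_comm, ← hab x, ← hab y]), map_add, map_add]
    simp only [F₀]
    abel
  · simpa using hF₀ m m 0 (by simp)

end GroupOfDifferences

section DemazureRoot

variable {M : Type*} [AddCommGroup M] {S : AddSubmonoid M} {ρ : M →+ ℤ} {α : M}

theorem add_nsmul_mem_of_le (hα : ρ α = -1) (hroot : ∀ m ∈ S, 0 < ρ m → m + α ∈ S)
    {m : M} (hm : m ∈ S) : ∀ n : ℕ, (n : ℤ) ≤ ρ m → m + n • α ∈ S
  | 0, _ => by simpa using hm
  | n + 1, hn => by
    have hpos : 0 < ρ (m + n • α) := by simp [hα]; omega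
    simpa [succ_nsmul, add_assoc] using hroot _ (add_nsmul_mem_of_le hα hroot hm n (by omega)) hpos

theorem mem_closure_singleton_of_forall_eq_zero (hgen : ∀ x : M, ∃ a ∈ S, ∃ b ∈ S, x = a - b)
    (hρ : ρ ∈ dualMonoid S) (hα : ρ α = -1) (hroot : ∀ m ∈ S, 0 < ρ m → m + α ∈ S) {u : M →+ ℤ}
    (hu : u ∈ dualMonoid S) (hker : ∀ m ∈ S, ρ m = 0 → u m = 0) :
    u ∈ AddSubmonoid.closure {ρ} := by
  have hS : ∀ m ∈ S, u m = ρ m * -u α := by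
    intro m hm
    have hρm : (((ρ m).toNat : ℕ) : ℤ) = ρ m := Int.toNat_of_nonneg (hρ m hm)
    have hm' := add_nsmul_mem_of_le hα hroot hm (ρ m).toNat hρm.le
    have h0 := hker _ hm' (by simp [hρm, hα])
    simp only [map_add, map_nsmul, nsmul_eq_mul, hρm] at h0
    linarith
  obtain ⟨a, ha, b, hb, hab⟩ := hgen α
  have hb_pos : 0 < ρ b := by
    have hρa := hρ a ha
    have hρab := congrArg ρ hab
    rw [map_sub, hα] at hρab
    omega
  have hcoef : 0 ≤ -u α := by
    have hub := hu b hb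
    rw [hS b hb] at hub
    exact nonneg_of_mul_nonneg_right hub hb_pos
  refine AddSubmonoid.mem_closure_singleton.mpr ⟨(-u α).toNat, ?_⟩
  refine AddMonoidHom.ext_of_forall_eq_sub hgen fun m hm ↦ ?_
  rw [AddMonoidHom.nsmul_apply, hS m hm, nsmul_eq_mul, Int.toNat_of_nonneg hcoef, mul_comm]

theorem isDemazureRoot_of_mem_dualMonoid (hgen : ∀ x : M, ∃ a ∈ S, ∃ b ∈ S, x = a - b)
    (hρ : ρ ∈ dualMonoid S) (hα : ρ α = -1) (hroot : ∀ m ∈ S, 0 < ρ m → m + α ∈ S) :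
    IsDemazureRoot S ρ α := by
  refine ⟨⟨fun h ↦ by simp [h] at hα, ?_, fun u hu v hv huv ↦ ?_⟩, hα, hroot⟩
  · simpa [AddSubmonoid.closure_le] using hρ
  obtain ⟨n, hn⟩ := AddSubmonoid.mem_closure_singleton.mp huv
  have hker : ∀ m ∈ S, ρ m = 0 → u m = 0 ∧ v m = 0 := by
    intro m hm h0
    have huv_m : u m + v m = 0 := by simpa [h0] using (DFunLike.congr_fun hn m).symm
    have := hu m hm
    have := hv m hm
    omega
  exact ⟨mem_closure_singleton_of_forall_eq_zero hgen hρ hα hroot hu fun m hm h ↦ (hker m hm h).1,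
    mem_closure_singleton_of_forall_eq_zero hgen hρ hα hroot hv fun m hm h ↦ (hker m hm h).2⟩

end DemazureRoot

theorem AddMonoidHom.exists_eq_zsmul_of_forall_mem_zmultiples {M K : Type*} [AddCommGroup M]
    [AddCommGroup K] [IsAddTorsionFree K] (F : M →+ K) {c : K} (hc : c ≠ 0)
    (h : ∀ x, F x ∈ AddSubgroup.zmultiples c) : ∃ ρ : M →+ ℤ, ∀ x, F x = ρ x • c := by
  choose ρ hρ using fun x ↦ AddSubgroup.mem_zmultiples_iff.mp (h x)
  refine ⟨AddMonoidHom.mk' ρ fun x y ↦ smul_left_injective ℤ hc ?_, fun x ↦ (hρ x).symm⟩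
  simp only [add_smul, hρ, map_add]

open AddMonoidAlgebra
open scoped AddMonoidAlgebra

section HomogeneousDerivation

variable {k M : Type*} [CommRing k] [AddCommGroup M] {S : AddSubmonoid M}
  {D : Derivation k k[S] k[S]} {α : M}

def Derivation.IsHomogeneous (D : Derivation k k[S] k[S]) (α : M) : Prop :=
  ∀ m : S, ∀ x ∈ (D (single m 1)).coeff.support, (x : M) = m + α

variable (D α) in
open Classical in
noncomputable def Derivation.homogCoeff (m : S) : k :=
  if h : (m : M) + α ∈ S then (D (single m 1)).coeff ⟨m + α, h⟩ else 0

namespace Derivation.IsHomogeneous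

theorem apply_single_one_of_not_mem (hD : D.IsHomogeneous α) {m : S} (h : (m : M) + α ∉ S) :
    D (single m 1) = 0 := by
  rw [← coeff_eq_zero, ← Finsupp.support_eq_empty, Finset.eq_empty_iff_forall_notMem]
  exact fun x hx ↦ h (hD m x hx ▸ x.2)

theorem apply_single_one_of_mem (hD : D.IsHomogeneous α) {m : S} (h : (m : M) + α ∈ S) :
    D (single m 1) = single ⟨m + α, h⟩ (D.homogCoeff α m) := by
  have hsupp : (D (single m 1)).coeff.support ⊆ {⟨m + α, h⟩} := fun x hx ↦
    Finset.mem_singleton.mpr (Subtype.ext (hD m x hx))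
  rw [← coeff_inj, Finsupp.support_subset_singleton.mp hsupp, coeff_single, homogCoeff, dif_pos h]

theorem coeff_single_one_mul_apply (hD : D.IsHomogeneous α) (a b p : S)
    (hp : (p : M) = a + (b + α)) :
    (single a 1 * D (single b 1)).coeff p = D.homogCoeff α b := by
  by_cases hb : (b : M) + α ∈ S
  · obtain rfl : p = a + ⟨b + α, hb⟩ := Subtype.ext hp
    rw [hD.apply_single_one_of_mem hb, coeff_single_mul_add, one_mul, coeff_single,
      Finsupp.single_eq_same]
  · rw [hD.apply_single_one_of_not_mem hb, mul_zero, homogCoeff, dif_neg hb]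
    rfl

theorem homogCoeff_add (hD : D.IsHomogeneous α) (a b : S) :
    D.homogCoeff α (a + b) = D.homogCoeff α a + D.homogCoeff α b := by
  by_cases h : ((a + b : S) : M) + α ∈ S
  · rw [homogCoeff, dif_pos h, ← one_mul (1 : k), ← single_mul_single, leibniz, smul_eq_mul,
      smul_eq_mul, coeff_add, Finsupp.add_apply,
      hD.coeff_single_one_mul_apply a b _ (by push_cast; abel),
      hD.coeff_single_one_mul_apply b a _ (by push_cast; abel), add_comm]
  · have ha : (a : M) + α ∉ S := fun ha ↦ h (by simpa [add_right_comm] using S.add_mem ha b.2)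
    have hb : (b : M) + α ∉ S := fun hb ↦ h (by simpa [add_assoc] using S.add_mem a.2 hb)
    simp only [homogCoeff, dif_neg h, dif_neg ha, dif_neg hb, add_zero]

variable (hD : D.IsHomogeneous α) in
noncomputable def homogCoeffHom : S →+ k where
  toFun := D.homogCoeff α
  map_zero' := by simpa using hD.homogCoeff_add 0 0
  map_add' := hD.homogCoeff_add

theorem exists_homogCoeff_eq_nsmul_of_iterate_eq_zero [IsDomain k] (hD : D.IsHomogeneous α)
    {F : M →+ k} (hF : ∀ m : S, F m = D.homogCoeff α m) :
    ∀ (n : ℕ) (m : S), D^[n] (single m 1) = 0 → ∃ p : ℕ, D.homogCoeff α m = p • -F α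
  | 0, m, h => absurd h (by simp)
  | n + 1, m, h => by
    by_cases hm : (m : M) + α ∈ S
    swap
    · exact ⟨0, by simp [homogCoeff, hm]⟩
    by_cases hc : D.homogCoeff α m = 0
    · exact ⟨0, by simp [hc]⟩
    rw [Function.iterate_succ_apply, hD.apply_single_one_of_mem hm, ← mul_one (D.homogCoeff α m),
      ← smul_single', (Function.Commute.iterate_left (D.map_smul _) n) _] at h
    obtain ⟨p, hp⟩ := exists_homogCoeff_eq_nsmul_of_iterate_eq_zero hD hF n _
      ((smul_eq_zero.mp h).resolve_left hc)
    refine ⟨p + 1, ?_⟩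
    have hshift : D.homogCoeff α ⟨m + α, hm⟩ = D.homogCoeff α m + F α := by
      rw [← hF, ← hF, map_add]
    rw [succ_nsmul, ← hp, hshift]
    abel

theorem exists_homogCoeff_ne_zero (hD : D.IsHomogeneous α) (hne : D ≠ 0) :
    ∃ m : S, D.homogCoeff α m ≠ 0 := by
  contrapose! hne
  have hsingle : ∀ m : S, D (single m 1) = 0 := fun m ↦ by
    by_cases hm : (m : M) + α ∈ S
    · rw [hD.apply_single_one_of_mem hm, hne m, single_zero]
    · exact hD.apply_single_one_of_not_mem hm
  ext f
  induction f using induction_linear with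
  | zero => simp
  | add f g hf hg => simp [hf, hg]
  | single m c => rw [← mul_one c, ← smul_single', map_smul, hsingle, smul_zero, zero_apply]

end Derivation.IsHomogeneous

end HomogeneousDerivation

theorem Derivation.IsHomogeneous.exists_homogCoeff_eq_zsmul {k M : Type*} [Field k] [CharZero k]
    [AddCommGroup M] {S : AddSubmonoid M} {D : Derivation k k[S] k[S]} {α : M}
    (hgen : ∀ x : M, ∃ a ∈ S, ∃ b ∈ S, x = a - b) (hD : D.IsHomogeneous α)
    (hlnd : ∀ f : k[S], ∃ n : ℕ, D^[n] f = 0) (hne : D ≠ 0) :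
    ∃ lam : k, lam ≠ 0 ∧ ∃ ρ : M →+ ℤ, ρ ∈ dualMonoid S ∧ ρ α = -1 ∧
      ∀ m : S, D.homogCoeff α m = ρ m • lam := by
  obtain ⟨F, hF⟩ : ∃ F : M →+ k, ∀ m : S, F m = D.homogCoeff α m :=
    AddMonoidHom.exists_extend_of_forall_eq_sub hgen hD.homogCoeffHom
  set lam := -F α
  have hnat : ∀ m : S, ∃ p : ℕ, D.homogCoeff α m = p • lam := fun m ↦
    (hlnd (single m 1)).elim (hD.exists_homogCoeff_eq_nsmul_of_iterate_eq_zero hF · m)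
  have hlam : lam ≠ 0 := by
    obtain ⟨m, hm⟩ := hD.exists_homogCoeff_ne_zero hne
    obtain ⟨p, hp⟩ := hnat m
    exact fun h ↦ hm (by simpa [h] using hp)
  obtain ⟨ρ, hρ⟩ := F.exists_eq_zsmul_of_forall_mem_zmultiples hlam fun x ↦ by
    obtain ⟨a, ha, b, hb, rfl⟩ := hgen x
    obtain ⟨p, hp⟩ := hnat ⟨a, ha⟩
    obtain ⟨q, hq⟩ := hnat ⟨b, hb⟩
    refine AddSubgroup.mem_zmultiples_iff.mpr ⟨p - q, ?_⟩
    rw [map_sub, hF ⟨a, ha⟩, hF ⟨b, hb⟩, hp, hq, sub_smul, natCast_zsmul, natCast_zsmul]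
  have hρS : ∀ m : S, D.homogCoeff α m = ρ m • lam := fun m ↦ (hF m).symm.trans (hρ m)
  refine ⟨lam, hlam, ρ, fun m hm ↦ ?_, smul_left_injective ℤ hlam (by simp [← hρ, lam]), hρS⟩
  obtain ⟨p, hp⟩ := hnat ⟨m, hm⟩
  have : ρ m = p := smul_left_injective ℤ hlam (by simp [← hρS ⟨m, hm⟩, hp])
  omega

theorem homogeneous_lnd_is_demazure_root_derivation_general
    {k M : Type*} [Field k] [CharZero k] [AddCommGroup M]
    (S : AddSubmonoid M)
    (hgen : ∀ x : M, ∃ a ∈ S, ∃ b ∈ S, x = a - b)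
    (D : Derivation k (AddMonoidAlgebra k S) (AddMonoidAlgebra k S)) (α : M)
    (hhom : ∀ m : S, ∀ x ∈ (D (AddMonoidAlgebra.single m (1 : k))).coeff.support,
      (x : M) = (m : M) + α)
    (hlnd : ∀ f : AddMonoidAlgebra k S, ∃ n : ℕ, (⇑D)^[n] f = 0)
    (hne : D ≠ 0) :
    ∃ ρ : M →+ ℤ, IsDemazureRoot S ρ α ∧
      ∃ lam : k, lam ≠ 0 ∧
        (∀ (m : S) (h : (m : M) + α ∈ S),
          D (AddMonoidAlgebra.single m (1 : k)) =
            (lam * ((ρ (m : M) : ℤ) : k)) •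
              AddMonoidAlgebra.single (⟨(m : M) + α, h⟩ : S) (1 : k)) ∧
        (∀ m : S, (m : M) + α ∉ S → D (AddMonoidAlgebra.single m (1 : k)) = 0) := by
  have hD : D.IsHomogeneous α := hhom
  obtain ⟨lam, hlam, ρ, hρ, hρα, hc⟩ := hD.exists_homogCoeff_eq_zsmul hgen hlnd hne
  refine ⟨ρ, isDemazureRoot_of_mem_dualMonoid hgen hρ hρα fun m hm hpos ↦ ?_,
    lam, hlam, fun m h ↦ ?_, fun m ↦ hD.apply_single_one_of_not_mem⟩
  · by_contra h
    have h0 := hc ⟨m, hm⟩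
    rw [Derivation.homogCoeff, dif_neg h] at h0
    exact smul_ne_zero hpos.ne' hlam h0.symm
  · rw [hD.apply_single_one_of_mem h, smul_single', mul_one, hc, zsmul_eq_mul, mul_comm]

/-- Every nonzero homogeneous locally nilpotent derivation of
degree `α` on the semigroup algebra of a cancellative monoid `S` (inside its
group of differences `M`) arises from a Demazure root: `α ∈ R(S)` and
`D = λ·∂_α` for some `λ ∈ k*`, where `∂_α(χ^m) = ρ(m)χ^{m+α}` for the
distinguished ray `ρ`. -/
theorem homogeneous_lnd_is_demazure_root_derivation
    {k M : Type*} [Field k] [IsAlgClosed k] [CharZero k] [AddCommGroup M]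
    (S : AddSubmonoid M)
    (hgen : ∀ x : M, ∃ a ∈ S, ∃ b ∈ S, x = a - b)
    (D : Derivation k (AddMonoidAlgebra k S) (AddMonoidAlgebra k S)) (α : M)
    (hhom : ∀ m : S, ∀ x ∈ (D (AddMonoidAlgebra.single m (1 : k))).coeff.support,
      (x : M) = (m : M) + α)
    (hlnd : ∀ f : AddMonoidAlgebra k S, ∃ n : ℕ, (⇑D)^[n] f = 0)
    (hne : D ≠ 0) :
    ∃ ρ : M →+ ℤ, IsDemazureRoot S ρ α ∧
      ∃ lam : k, lam ≠ 0 ∧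
        (∀ (m : S) (h : (m : M) + α ∈ S),
          D (AddMonoidAlgebra.single m (1 : k)) =
            (lam * ((ρ (m : M) : ℤ) : k)) •
              AddMonoidAlgebra.single (⟨(m : M) + α, h⟩ : S) (1 : k)) ∧
        (∀ m : S, (m : M) + α ∉ S → D (AddMonoidAlgebra.single m (1 : k)) = 0) :=
  homogeneous_lnd_is_demazure_root_derivation_general S hgen D α hhom hlnd hne
end
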